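/- Let λ, e₁, e₂, π ∈ ℝ and consider the infimum ρ of g(z₁,z₂) = λz₁z₂ + ½z₂² + e₁z₁ + e₂z₂ over all (z₁,z₂) ∈ ℝ² with z₁z₂ ≤ π. If (λ ≤ 0, e₁ = 0 and e₂ ≠ 0), or (λ = 0, e₁ = 0, e₂ = 0 and π ≥ 0), or (λ < 0, e₁ = 0, e₂ = 0 and π = 0), then ρ = λπ − ½e₂² and the infimum is attained, i.e., there exists (z₁,z₂) with z₁z₂ ≤ π and g(z₁,z₂) = λπ − ½e₂². -/

import Mathlib

/-! In every listed case `λ ≤ 0` and `e₁ = 0`, so on the feasible set `λ z₁ z₂ ≥ λ π`, while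
`½ z₂² + e₂ z₂ = ½ (z₂ + e₂)² - ½ e₂² ≥ -½ e₂²`. Both bounds are tight at `z₂ = -e₂` with
`z₁ z₂ = π` (take `z₁ = -π / e₂` when `e₂ ≠ 0`); when `e₂ = 0` the point `(0, 0)` works, since
then `λ · 0 = λ π` because `λ = 0` or `π = 0`. -/

namespace BilinearQuadratic

noncomputable def objective (lam e₁ e₂ z₁ z₂ : ℝ) : ℝ :=
  lam * (z₁ * z₂) + (1/2) * z₂ ^ 2 + e₁ * z₁ + e₂ * z₂

variable {lam e₂ p z₁ z₂ : ℝ}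

theorem le_objective_of_nonpos (hlam : lam ≤ 0) (hz : z₁ * z₂ ≤ p) :
    lam * p - (1/2) * e₂ ^ 2 ≤ objective lam 0 e₂ z₁ z₂ := by
  have hbilin : lam * p ≤ lam * (z₁ * z₂) := mul_le_mul_of_nonpos_left hz hlam
  have hsq : 0 ≤ (1/2) * (z₂ + e₂) ^ 2 := by positivity
  unfold objective
  nlinarith

theorem objective_neg_right (lam e₂ z₁ : ℝ) :
    objective lam 0 e₂ z₁ (-e₂) = lam * (z₁ * -e₂) - (1/2) * e₂ ^ 2 := by
  unfold objective
  ring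

end BilinearQuadratic

open BilinearQuadratic in
theorem stmt_6 (lam e₁ e₂ p : ℝ)
    (hcase : (lam ≤ 0 ∧ e₁ = 0 ∧ e₂ ≠ 0) ∨ (lam = 0 ∧ e₁ = 0 ∧ e₂ = 0 ∧ 0 ≤ p) ∨
      (lam < 0 ∧ e₁ = 0 ∧ e₂ = 0 ∧ p = 0)) :
    (∀ z₁ z₂ : ℝ, z₁ * z₂ ≤ p →
      lam * p - (1/2) * e₂ ^ 2 ≤ lam * (z₁ * z₂) + (1/2) * z₂ ^ 2 + e₁ * z₁ + e₂ * z₂) ∧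
    (∃ z₁ z₂ : ℝ, z₁ * z₂ ≤ p ∧
      lam * (z₁ * z₂) + (1/2) * z₂ ^ 2 + e₁ * z₁ + e₂ * z₂ = lam * p - (1/2) * e₂ ^ 2) := by
  obtain ⟨hlam, rfl, z₁, hz, hbilin⟩ :
      lam ≤ 0 ∧ e₁ = 0 ∧ ∃ z₁, z₁ * -e₂ ≤ p ∧ lam * (z₁ * -e₂) = lam * p := by
    rcases hcase with ⟨hlam, he₁, he₂⟩ | ⟨rfl, he₁, rfl, hp⟩ | ⟨hlam, he₁, rfl, rfl⟩
    · have hprod : -p / e₂ * -e₂ = p := by field_simp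
      exact ⟨hlam, he₁, -p / e₂, hprod.le, by rw [hprod]⟩
    · exact ⟨le_rfl, he₁, 0, by simpa using hp, by simp⟩
    · exact ⟨hlam.le, he₁, 0, by simp, by simp⟩
  refine ⟨fun z₁ z₂ hz => le_objective_of_nonpos hlam hz, z₁, -e₂, hz, ?_⟩
  exact (objective_neg_right lam e₂ z₁).trans (by rw [hbilin])
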